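/- The map Υ is a bijective isometry of lattices: Υ(u)•Υ(v) = u•v for all u, v ∈ Pic_Y; it maps the anticanonical class 2H_f+2H_g−L_1−⋯−L_8 to 2H_q+2H_p−E_1−⋯−E_8 and maps the surface root basis of the perturbed Laguerre surface to the surface root basis of the Kajiwara–Noumi–Yamada D₅⁽¹⁾ surface: Υ(H_f−L_1−L_2) = E_1−E_2, Υ(H_f−L_7−L_8) = E_3−E_4, Υ(H_g−L_3−L_4) = H_q−E_1−E_3, Υ(L_4−L_5) = H_p−E_5−E_7, Υ(L_3−L_4) = E_5−E_6, Υ(L_5−L_6) = E_7−E_8. -/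
import Mathlib


abbrev Pic : Type := Fin 10 → ℤ

/-- The intersection form on `Pic` in the basis `H_q, H_p, E_1, …, E_8`:
`H_q•H_p = 1`, `H_q•H_q = H_p•H_p = 0`, `H_q•E_i = H_p•E_i = 0`, `E_i•E_j = -δ_ij`.
(Coordinate `0` is `H_q`, coordinate `1` is `H_p`, coordinates `2,…,9` are `E_1,…,E_8`.) -/
def bil (u v : Pic) : ℤ :=
  u 0 * v 1 + u 1 * v 0 - u 2 * v 2 - u 3 * v 3 - u 4 * v 4 - u 5 * v 5
    - u 6 * v 6 - u 7 * v 7 - u 8 * v 8 - u 9 * v 9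

/-- The Picard lattice `Pic_Y` of the surfaces from the perturbed Laguerre weight,
with basis `H_f, H_g, L_1, …, L_8`
(coordinate `0` is `H_f`, coordinate `1` is `H_g`, coordinates `2,…,9` are `L_1,…,L_8`). -/
abbrev PicY : Type := Fin 10 → ℤ

/-- The intersection form on `Pic_Y`:
`H_f•H_g = 1`, `H_f•H_f = H_g•H_g = 0`, `H_f•L_i = H_g•L_i = 0`, `L_i•L_j = -δ_ij`. -/
def bilY (u v : PicY) : ℤ :=
  u 0 * v 1 + u 1 * v 0 - u 2 * v 2 - u 3 * v 3 - u 4 * v 4 - u 5 * v 5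
    - u 6 * v 6 - u 7 * v 7 - u 8 * v 8 - u 9 * v 9

/-- The linear map sending the `j`-th basis vector to `v j`. -/
def mkMap (v : Fin 10 → (Fin 10 → ℤ)) : (Fin 10 → ℤ) →ₗ[ℤ] (Fin 10 → ℤ) :=
  Matrix.toLin' (Matrix.of fun i j => v j i)

/-- The identification `Υ : Pic_Y → Pic`, given by its values on the basis
`H_f, H_g, L_1, …, L_8` of `Pic_Y`, each expressed in the basis `H_q, H_p, E_1, …, E_8`:
`Υ(H_f) = H_q+H_p-E_5-E_6`, `Υ(H_g) = H_q+2H_p-E_1-E_3-E_5-E_6`,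
`Υ(L_1) = H_q+H_p-E_1-E_5-E_6`, `Υ(L_2) = E_2`, `Υ(L_3) = H_p-E_6`, `Υ(L_4) = H_p-E_5`,
`Υ(L_5) = E_7`, `Υ(L_6) = E_8`, `Υ(L_7) = H_q+H_p-E_3-E_5-E_6`, `Υ(L_8) = E_4`. -/
def Υ : PicY →ₗ[ℤ] Pic := mkMap
  ![![1, 1, 0, 0, 0, 0, -1, -1, 0, 0],
    ![1, 2, -1, 0, -1, 0, -1, -1, 0, 0],
    ![1, 1, -1, 0, 0, 0, -1, -1, 0, 0],
    ![0, 0, 0, 1, 0, 0, 0, 0, 0, 0],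
    ![0, 1, 0, 0, 0, 0, 0, -1, 0, 0],
    ![0, 1, 0, 0, 0, 0, -1, 0, 0, 0],
    ![0, 0, 0, 0, 0, 0, 0, 0, 1, 0],
    ![0, 0, 0, 0, 0, 0, 0, 0, 0, 1],
    ![1, 1, 0, 0, -1, 0, -1, -1, 0, 0],
    ![0, 0, 0, 0, 0, 1, 0, 0, 0, 0]]

def Mmat : Matrix (Fin 10) (Fin 10) ℤ := Matrix.of fun i j =>
  (![![1, 1, 0, 0, 0, 0, -1, -1, 0, 0],
    ![1, 2, -1, 0, -1, 0, -1, -1, 0, 0],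
    ![1, 1, -1, 0, 0, 0, -1, -1, 0, 0],
    ![0, 0, 0, 1, 0, 0, 0, 0, 0, 0],
    ![0, 1, 0, 0, 0, 0, 0, -1, 0, 0],
    ![0, 1, 0, 0, 0, 0, -1, 0, 0, 0],
    ![0, 0, 0, 0, 0, 0, 0, 0, 1, 0],
    ![0, 0, 0, 0, 0, 0, 0, 0, 0, 1],
    ![1, 1, 0, 0, -1, 0, -1, -1, 0, 0],
    ![0, 0, 0, 0, 0, 1, 0, 0, 0, 0]] : Fin 10 → Fin 10 → ℤ) j i

def Minv : Matrix (Fin 10) (Fin 10) ℤ := Matrix.of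
  ![![2, 1, 1, 0, 1, 0, 1, 1, 0, 0],
    ![1, 1, 0, 0, 0, 0, 1, 1, 0, 0],
    ![-1, -1, -1, 0, 0, 0, -1, -1, 0, 0],
    ![0, 0, 0, 1, 0, 0, 0, 0, 0, 0],
    ![-1, 0, 0, 0, 0, 0, 0, -1, 0, 0],
    ![-1, 0, 0, 0, 0, 0, -1, 0, 0, 0],
    ![0, 0, 0, 0, 0, 0, 0, 0, 1, 0],
    ![0, 0, 0, 0, 0, 0, 0, 0, 0, 1],
    ![-1, -1, 0, 0, -1, 0, -1, -1, 0, 0],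
    ![0, 0, 0, 0, 0, 1, 0, 0, 0, 0]]

lemma upsilon_eq : Υ = Matrix.toLin' Mmat := rfl

lemma hMinvM : Minv * Mmat = 1 := by decide
lemma hMMinv : Mmat * Minv = 1 := by decide

lemma sum10 (f : Fin 10 → ℤ) : ∑ i, f i =
    f 0 + f 1 + f 2 + f 3 + f 4 + f 5 + f 6 + f 7 + f 8 + f 9 := by
  rw [show (Finset.univ : Finset (Fin 10)) = {0,1,2,3,4,5,6,7,8,9} from rfl]
  simp [Finset.sum_insert, Finset.mem_insert]
  ring

section
variable {α : Type*} (a b c d e f g h i j : α)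
lemma w0 : ![a,b,c,d,e,f,g,h,i,j] (0 : Fin 10) = a := rfl
lemma w1 : ![a,b,c,d,e,f,g,h,i,j] (1 : Fin 10) = b := rfl
lemma w2 : ![a,b,c,d,e,f,g,h,i,j] (2 : Fin 10) = c := rfl
lemma w3 : ![a,b,c,d,e,f,g,h,i,j] (3 : Fin 10) = d := rfl
lemma w4 : ![a,b,c,d,e,f,g,h,i,j] (4 : Fin 10) = e := rfl
lemma w5 : ![a,b,c,d,e,f,g,h,i,j] (5 : Fin 10) = f := rfl
lemma w6 : ![a,b,c,d,e,f,g,h,i,j] (6 : Fin 10) = g := rfl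
lemma w7 : ![a,b,c,d,e,f,g,h,i,j] (7 : Fin 10) = h := rfl
lemma w8 : ![a,b,c,d,e,f,g,h,i,j] (8 : Fin 10) = i := rfl
lemma w9 : ![a,b,c,d,e,f,g,h,i,j] (9 : Fin 10) = j := rfl
end

lemma ups_key (u : PicY) (k : Fin 10) : Υ u k = ∑ j, Mmat k j * u j := rfl

lemma ups_apply (u : PicY) : Υ u =
    ![u 0 + u 1 + u 2 + u 8,
      u 0 + 2*u 1 + u 2 + u 4 + u 5 + u 8,
      -u 1 - u 2,
      u 3,
      -u 1 - u 8,
      u 9,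
      -u 0 - u 1 - u 2 - u 5 - u 8,
      -u 0 - u 1 - u 2 - u 4 - u 8,
      u 6,
      u 7] := by
  have h0 : Υ u 0 = u 0 + u 1 + u 2 + u 8 := by
    rw [ups_key, sum10]; simp only [Mmat, Matrix.of_apply, w0,w1,w2,w3,w4,w5,w6,w7,w8,w9]; ring
  have h1 : Υ u 1 = u 0 + 2*u 1 + u 2 + u 4 + u 5 + u 8 := by
    rw [ups_key, sum10]; simp only [Mmat, Matrix.of_apply, w0,w1,w2,w3,w4,w5,w6,w7,w8,w9]; ring
  have h2 : Υ u 2 = -u 1 - u 2 := by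
    rw [ups_key, sum10]; simp only [Mmat, Matrix.of_apply, w0,w1,w2,w3,w4,w5,w6,w7,w8,w9]; ring
  have h3 : Υ u 3 = u 3 := by
    rw [ups_key, sum10]; simp only [Mmat, Matrix.of_apply, w0,w1,w2,w3,w4,w5,w6,w7,w8,w9]; ring
  have h4 : Υ u 4 = -u 1 - u 8 := by
    rw [ups_key, sum10]; simp only [Mmat, Matrix.of_apply, w0,w1,w2,w3,w4,w5,w6,w7,w8,w9]; ring
  have h5 : Υ u 5 = u 9 := by
    rw [ups_key, sum10]; simp only [Mmat, Matrix.of_apply, w0,w1,w2,w3,w4,w5,w6,w7,w8,w9]; ring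
  have h6 : Υ u 6 = -u 0 - u 1 - u 2 - u 5 - u 8 := by
    rw [ups_key, sum10]; simp only [Mmat, Matrix.of_apply, w0,w1,w2,w3,w4,w5,w6,w7,w8,w9]; ring
  have h7 : Υ u 7 = -u 0 - u 1 - u 2 - u 4 - u 8 := by
    rw [ups_key, sum10]; simp only [Mmat, Matrix.of_apply, w0,w1,w2,w3,w4,w5,w6,w7,w8,w9]; ring
  have h8 : Υ u 8 = u 6 := by
    rw [ups_key, sum10]; simp only [Mmat, Matrix.of_apply, w0,w1,w2,w3,w4,w5,w6,w7,w8,w9]; ring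
  have h9 : Υ u 9 = u 7 := by
    rw [ups_key, sum10]; simp only [Mmat, Matrix.of_apply, w0,w1,w2,w3,w4,w5,w6,w7,w8,w9]; ring
  funext i
  fin_cases i
  exacts [h0, h1, h2, h3, h4, h5, h6, h7, h8, h9]

set_option maxHeartbeats 1000000 in
/-- `Υ` is a bijective isometry of lattices mapping the anticanonical class
`2H_f+2H_g-L_1-⋯-L_8` to `2H_q+2H_p-E_1-⋯-E_8` and the surface root basis of the
perturbed Laguerre surface to the surface root basis of the KNY `D₅⁽¹⁾` surface:
`Υ(H_f-L_1-L_2) = E_1-E_2`, `Υ(H_f-L_7-L_8) = E_3-E_4`, `Υ(H_g-L_3-L_4) = H_q-E_1-E_3`,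
`Υ(L_4-L_5) = H_p-E_5-E_7`, `Υ(L_3-L_4) = E_5-E_6`, `Υ(L_5-L_6) = E_7-E_8`. -/
theorem upsilon_isometry_and_surface_roots :
    Function.Bijective (⇑Υ)
    ∧ (∀ u v : PicY, bil (Υ u) (Υ v) = bilY u v)
    ∧ Υ ![2, 2, -1, -1, -1, -1, -1, -1, -1, -1] = ![2, 2, -1, -1, -1, -1, -1, -1, -1, -1]
    ∧ Υ ![1, 0, -1, -1, 0, 0, 0, 0, 0, 0] = ![0, 0, 1, -1, 0, 0, 0, 0, 0, 0]
    ∧ Υ ![1, 0, 0, 0, 0, 0, 0, 0, -1, -1] = ![0, 0, 0, 0, 1, -1, 0, 0, 0, 0]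
    ∧ Υ ![0, 1, 0, 0, -1, -1, 0, 0, 0, 0] = ![1, 0, -1, 0, -1, 0, 0, 0, 0, 0]
    ∧ Υ ![0, 0, 0, 0, 0, 1, -1, 0, 0, 0] = ![0, 1, 0, 0, 0, 0, -1, 0, -1, 0]
    ∧ Υ ![0, 0, 0, 0, 1, -1, 0, 0, 0, 0] = ![0, 0, 0, 0, 0, 0, 1, -1, 0, 0]
    ∧ Υ ![0, 0, 0, 0, 0, 0, 1, -1, 0, 0] = ![0, 0, 0, 0, 0, 0, 0, 0, 1, -1] := by
  refine ⟨?_, ?_, by decide, by decide, by decide, by decide, by decide, by decide, by decide⟩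
  · rw [Function.bijective_iff_has_inverse]
    refine ⟨Matrix.toLin' Minv, fun u => ?_, fun u => ?_⟩
    · simp [upsilon_eq, Matrix.toLin'_apply, Matrix.mulVec_mulVec, hMinvM]
    · simp [upsilon_eq, Matrix.toLin'_apply, Matrix.mulVec_mulVec, hMMinv]
  · intro u v
    rw [ups_apply u, ups_apply v]
    simp only [bil, bilY, w0,w1,w2,w3,w4,w5,w6,w7,w8,w9]
    ring
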